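/- arXiv:2503.10587 — 3 statements merged into one kernel-verified Lean document; each statement's English description precedes it below -/
import Mathlib

section
/- For a single ReLU neuron trained by gradient flow on any differentiable loss L(θ) = ℓ(f_θ) depending on θ = (w, b, v) only through the function f_θ(x) = v · max(⟨w,x⟩ + b, 0), the quantity δ = v² − ‖w‖² − b² is invariant: d/dt (v(t)² − ‖w(t)‖² − b(t)²) = 0 along gradient flow trajectories. -/
/-!
Positive homogeneity of the ReLU makes the loss invariant under the rescaling
`(w, b, v) ↦ (w / c, b / c, c v)`, `c > 0`. Infinitesimally this is the Euler identity
`v ∂ᵥL = ⟪w, ∇_w L⟫ + b ∂_b L`, which away from the kinks reduces to `relu' z * z = relu z`.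
Along the gradient flow, `d/dt (v² - ‖w‖² - b²) = -2 (v ∂ᵥL - ⟪w, ∇_w L⟫ - b ∂_b L) = 0`.
-/

open scoped RealInnerProductSpace

/-- The value `0` at the kink makes `reluDeriv_mul_self` hold everywhere. -/
noncomputable def reluDeriv (z : ℝ) : ℝ := if 0 < z then 1 else 0

lemma reluDeriv_mul_self (z : ℝ) : reluDeriv z * z = max z 0 := by
  unfold reluDeriv
  split_ifs with hz
  · simp [hz.le]
  · simp [not_lt.mp hz]

lemma hasDerivAt_relu {z : ℝ} (hz : z ≠ 0) :
    HasDerivAt (fun y => max y 0) (reluDeriv z) z := by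
  rcases hz.lt_or_gt with hneg | hpos
  · have hzero : (fun y : ℝ => max y 0) =ᶠ[nhds z] fun _ => 0 := by
      filter_upwards [Iio_mem_nhds hneg] with y hy using max_eq_right hy.le
    simpa [reluDeriv, not_lt.mpr hneg.le] using
      (hasDerivAt_const z (0 : ℝ)).congr_of_eventuallyEq hzero
  · have hid : (fun y : ℝ => max y 0) =ᶠ[nhds z] id := by
      filter_upwards [Ioi_mem_nhds hpos] with y hy using max_eq_left hy.le
    simpa [reluDeriv, hpos] using (hasDerivAt_id z).congr_of_eventuallyEq hid

section NeuronLoss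

variable {E ι : Type*} [NormedAddCommGroup E] [InnerProductSpace ℝ E] [Fintype ι]
  (x : ι → E) (ℓ : ι → ℝ → ℝ)

def neuronLoss (ω : E) (β ν : ℝ) : ℝ := ∑ n, ℓ n (ν * max (⟪ω, x n⟫ + β) 0)

variable {x ℓ} (hℓ : ∀ n, Differentiable ℝ (ℓ n)) {ω : E} {β ν : ℝ}
include hℓ

lemma hasDerivAt_neuronLoss_outputWeight :
    HasDerivAt (neuronLoss x ℓ ω β)
      (∑ n, deriv (ℓ n) (ν * max (⟪ω, x n⟫ + β) 0) * max (⟪ω, x n⟫ + β) 0) ν :=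
  HasDerivAt.fun_sum fun n _ => (hℓ n _).hasDerivAt.comp ν (hasDerivAt_mul_const _)

lemma hasDerivAt_neuronLoss_bias (hne : ∀ n, ⟪ω, x n⟫ + β ≠ 0) :
    HasDerivAt (fun β => neuronLoss x ℓ ω β ν)
      (∑ n, deriv (ℓ n) (ν * max (⟪ω, x n⟫ + β) 0) * (ν * reluDeriv (⟪ω, x n⟫ + β))) β := by
  refine HasDerivAt.fun_sum fun n _ => ?_
  have hpre : HasDerivAt (fun β => ⟪ω, x n⟫ + β) 1 β := (hasDerivAt_id β).const_add _
  have hact : HasDerivAt (fun β => ν * max (⟪ω, x n⟫ + β) 0)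
      (ν * reluDeriv (⟪ω, x n⟫ + β)) β := by
    simpa only [mul_one, Function.comp_def] using
      ((hasDerivAt_relu (hne n)).comp β hpre).const_mul ν
  exact (hℓ n _).hasDerivAt.comp β hact

lemma hasFDerivAt_neuronLoss_inputWeight (hne : ∀ n, ⟪ω, x n⟫ + β ≠ 0) :
    HasFDerivAt (fun ω => neuronLoss x ℓ ω β ν)
      (∑ n, (deriv (ℓ n) (ν * max (⟪ω, x n⟫ + β) 0) * (ν * reluDeriv (⟪ω, x n⟫ + β))) •
        innerSLFlip ℝ (x n)) ω := by
  refine HasFDerivAt.fun_sum fun n _ => ?_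
  have hpre : HasFDerivAt (fun ω => ⟪ω, x n⟫ + β) (innerSLFlip ℝ (x n)) ω :=
    (innerSLFlip ℝ (x n)).hasFDerivAt.add_const β
  have hact : HasFDerivAt (fun ω => ν * max (⟪ω, x n⟫ + β) 0)
      (ν • reluDeriv (⟪ω, x n⟫ + β) • innerSLFlip ℝ (x n)) ω := by
    simpa only [Function.comp_def] using
      ((hasDerivAt_relu (hne n)).comp_hasFDerivAt ω hpre).const_mul ν
  simpa only [smul_smul, Function.comp_def] using
    (hℓ n _).hasDerivAt.comp_hasFDerivAt ω hact

lemma neuronLoss_euler_identity (hne : ∀ n, ⟪ω, x n⟫ + β ≠ 0) :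
    ν * deriv (neuronLoss x ℓ ω β) ν
      = fderiv ℝ (fun ω => neuronLoss x ℓ ω β ν) ω ω
        + β * deriv (fun β => neuronLoss x ℓ ω β ν) β := by
  rw [(hasDerivAt_neuronLoss_outputWeight hℓ).deriv, (hasDerivAt_neuronLoss_bias hℓ hne).deriv,
    (hasFDerivAt_neuronLoss_inputWeight hℓ hne).fderiv, Finset.mul_sum, Finset.mul_sum,
    FunLike.coe_sum, Finset.sum_apply, ← Finset.sum_add_distrib]
  refine Finset.sum_congr rfl fun n _ => ?_
  simp only [FunLike.coe_smul, Pi.smul_apply, smul_eq_mul]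
  rw [innerSLFlip_apply_apply]
  linear_combination
    (-ν * deriv (ℓ n) (ν * max (⟪ω, x n⟫ + β) 0)) * reluDeriv_mul_self (⟪ω, x n⟫ + β)

end NeuronLoss

/-- Along gradient-flow trajectories of a single ReLU neuron, for a loss
`L(w,b,v) = ∑ₙ ℓₙ(v · max(⟨w,xₙ⟩ + b, 0))` depending on the parameters only
through the network function, the quantity `δ = v² − ‖w‖² − b²` is conserved. -/
theorem relu_gradient_flow_delta_invariant
    (D N : ℕ) (x : Fin N → EuclideanSpace ℝ (Fin D))
    (ℓ : Fin N → ℝ → ℝ) (hℓ : ∀ n, Differentiable ℝ (ℓ n))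
    (L : EuclideanSpace ℝ (Fin D) → ℝ → ℝ → ℝ)
    (hL : ∀ ω β ν, L ω β ν = ∑ n, ℓ n (ν * max (⟪ω, x n⟫ + β) 0))
    (w : ℝ → EuclideanSpace ℝ (Fin D)) (b v : ℝ → ℝ)
    (w' : ℝ → EuclideanSpace ℝ (Fin D)) (b' v' : ℝ → ℝ)
    (hw : ∀ t, HasDerivAt w (w' t) t)
    (hb : ∀ t, HasDerivAt b (b' t) t)
    (hv : ∀ t, HasDerivAt v (v' t) t)
    (hgw : ∀ t, ∀ u : EuclideanSpace ℝ (Fin D),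
      ⟪w' t, u⟫ = - fderiv ℝ (fun ω => L ω (b t) (v t)) (w t) u)
    (hgb : ∀ t, b' t = - deriv (fun β => L (w t) β (v t)) (b t))
    (hgv : ∀ t, v' t = - deriv (fun ν => L (w t) (b t) ν) (v t))
    (hne : ∀ t, ∀ n, ⟪w t, x n⟫ + b t ≠ 0) :
    ∀ t, HasDerivAt (fun s => (v s) ^ 2 - ‖w s‖ ^ 2 - (b s) ^ 2) 0 t := by
  obtain rfl : L = neuronLoss x ℓ := funext fun ω => funext fun β => funext (hL ω β)
  intro t
  have heuler := neuronLoss_euler_identity (ν := v t) hℓ (hne t)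
  have hgw' : ⟪w t, w' t⟫ = -fderiv ℝ (fun ω => neuronLoss x ℓ ω (b t) (v t)) (w t) (w t) := by
    rw [real_inner_comm, hgw]
  refine ((((hv t).pow 2).sub (hw t).norm_sq).sub ((hb t).pow 2)).congr_deriv ?_
  rw [hgv t, hgb t, hgw']
  linear_combination (-2) * heuler
end

section
/- Weighted Fourier slice identity: for f : ℝ^D → ℂ and a measurable even function h : ℝ → ℂ with |h(−ϑ)| = |h(ϑ)|, one has ∫_{S^{D-1}} ∫_ℝ |h(ϑ) 𝓕_D[f](ϑ ξ)|² dϑ dξ = 2 ∫_{ℝ^D} |h(‖k‖)|² ‖k‖^{-(D-1)} |𝓕_D[f](k)|² dk, whenever the right side is finite. -/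
open MeasureTheory
open scoped FourierTransform

/-! By evenness of `‖h‖`, the integrand on the line through `ξ` is `u (ϑ • ξ)` with
`u k = ‖h ‖k‖‖² ‖𝓕 f k‖²`. Splitting each line into its two open rays, the left side is the
sum of the polar-coordinate integrals `∫ ξ, ∫ r > 0, u (± r • ξ)`, in which the factor
`‖k‖ ^ (-(D - 1))` of the right side has cancelled the Jacobian `r ^ (D - 1)`; the two
halves agree because Haar measure is invariant under `k ↦ -k`. -/

open Measure Set Metric Module

variable {E F : Type*} [NormedAddCommGroup E] [NormedSpace ℝ E] [NormedAddCommGroup F]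

section

variable [NormedSpace ℝ F]

theorem integral_volumeIoiPow (n : ℕ) (φ : ℝ → F) :
    ∫ r, φ r ∂volumeIoiPow n = ∫ r in Ioi 0, r ^ n • φ r := by
  simp only [volumeIoiPow, ENNReal.ofReal]
  rw [integral_withDensity_eq_integral_smul (by fun_prop),
    ← integral_subtype_comap measurableSet_Ioi]
  refine integral_congr_ae (.of_forall fun r => ?_)
  simp only [NNReal.smul_def, Real.coe_toNNReal _ (pow_nonneg r.2.out.le _)]

theorem integrable_volumeIoiPow_iff {n : ℕ} {φ : ℝ → F} :
    Integrable (fun r : Ioi (0 : ℝ) => φ r) (volumeIoiPow n) ↔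
      IntegrableOn (fun r => r ^ n • φ r) (Ioi 0) := by
  rw [volumeIoiPow, integrable_withDensity_iff_integrable_smul' (by fun_prop) (by simp),
    integrableOn_iff_comap_subtypeVal measurableSet_Ioi]
  refine integrable_congr (.of_forall fun r => ?_)
  simp [ENNReal.toReal_ofReal (pow_nonneg r.2.out.le _)]

theorem integral_eq_integral_Ioi_add_integral_Ioi_comp_neg {φ : ℝ → F}
    (h_pos : IntegrableOn φ (Ioi 0)) (h_neg : IntegrableOn (fun r => φ (-r)) (Ioi 0)) :
    ∫ t, φ t = (∫ r in Ioi 0, φ r) + ∫ r in Ioi 0, φ (-r) := by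
  have h_Iic : IntegrableOn φ (Iic 0) := by
    rw [← (measurePreserving_neg volume).integrableOn_comp_preimage
      (Homeomorph.neg ℝ).measurableEmbedding, neg_preimage, neg_Iic, neg_zero]
    exact Iff.mpr integrableOn_Ici_iff_integrableOn_Ioi h_neg
  rw [← intervalIntegral.integral_Iic_add_Ioi h_Iic h_pos, integral_comp_neg_Ioi, neg_zero,
    add_comm]

theorem eqOn_pow_smul_norm_rpow_smul [FiniteDimensional ℝ E] [Nontrivial E] (u : E → F)
    (ξ : sphere (0 : E) 1) :
    EqOn (fun r : ℝ => r ^ (finrank ℝ E - 1) •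
        (‖r • ξ.1‖ ^ (-((finrank ℝ E : ℝ) - 1)) • u (r • ξ.1)))
      (fun r => u (r • ξ.1)) (Ioi 0) := by
  intro r (hr : 0 < r)
  have hnorm : ‖r • ξ.1‖ = r := by
    rw [norm_smul, norm_eq_of_mem_sphere ξ, mul_one, Real.norm_of_nonneg hr.le]
  simp only [hnorm, smul_smul]
  rw [← Real.rpow_natCast, Nat.cast_sub finrank_pos, Nat.cast_one, ← Real.rpow_add hr,
    add_neg_cancel, Real.rpow_zero, one_smul]

theorem integral_volumeIoiPow_norm_rpow_smul [FiniteDimensional ℝ E] [Nontrivial E]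
    (u : E → F) (ξ : sphere (0 : E) 1) :
    ∫ r, ‖r.1 • ξ.1‖ ^ (-((finrank ℝ E : ℝ) - 1)) • u (r.1 • ξ.1)
        ∂volumeIoiPow (finrank ℝ E - 1) = ∫ r in Ioi (0 : ℝ), u (r • ξ.1) :=
  (integral_volumeIoiPow _ fun r : ℝ => ‖r • ξ.1‖ ^ (-((finrank ℝ E : ℝ) - 1)) •
    u (r • ξ.1)).trans
    (setIntegral_congr_fun measurableSet_Ioi (eqOn_pow_smul_norm_rpow_smul u ξ))

end

section

variable [FiniteDimensional ℝ E] [Nontrivial E] [MeasurableSpace E] [BorelSpace E]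
  (μ : Measure E) [μ.IsAddHaarMeasure]

theorem integrable_comp_smul_sphere_prod_iff {g : E → F} :
    Integrable (fun p : sphere (0 : E) 1 × Ioi (0 : ℝ) => g (p.2.1 • p.1.1))
      (μ.toSphere.prod (volumeIoiPow (finrank ℝ E - 1))) ↔ Integrable g μ := by
  rw [← μ.measurePreserving_homeomorphUnitSphereProd.integrable_comp_emb
    (Homeomorph.measurableEmbedding _)]
  simp only [Function.comp_def, ← homeomorphUnitSphereProd_symm_apply_coe,
    Homeomorph.symm_apply_apply]
  conv_rhs => rw [← restrict_compl_singleton (μ := μ) 0]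
  exact (integrableOn_iff_comap_subtypeVal (measurableSet_singleton 0).compl).symm

variable [NormedSpace ℝ F]

theorem integral_eq_integral_sphere_prod (g : E → F) :
    ∫ x, g x ∂μ = ∫ p : sphere (0 : E) 1 × Ioi (0 : ℝ), g (p.2.1 • p.1.1)
      ∂(μ.toSphere.prod (volumeIoiPow (finrank ℝ E - 1))) := by
  rw [← μ.measurePreserving_homeomorphUnitSphereProd.integral_comp
    (Homeomorph.measurableEmbedding _)]
  simp only [← homeomorphUnitSphereProd_symm_apply_coe, Homeomorph.symm_apply_apply]
  rw [integral_subtype_comap (measurableSet_singleton 0).compl, restrict_compl_singleton]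

variable {μ} {u : E → F}

theorem integral_norm_rpow_smul_eq_integral_toSphere_integral_Ioi
    (hu : Integrable (fun x => ‖x‖ ^ (-((finrank ℝ E : ℝ) - 1)) • u x) μ) :
    ∫ x, ‖x‖ ^ (-((finrank ℝ E : ℝ) - 1)) • u x ∂μ =
      ∫ ξ : sphere (0 : E) 1, (∫ r in Ioi (0 : ℝ), u (r • ξ.1)) ∂μ.toSphere := by
  rw [integral_eq_integral_sphere_prod,
    integral_prod _ ((integrable_comp_smul_sphere_prod_iff μ).2 hu)]
  exact integral_congr_ae (.of_forall (integral_volumeIoiPow_norm_rpow_smul u))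

theorem integrable_toSphere_integral_Ioi_of_integrable_norm_rpow_smul
    (hu : Integrable (fun x => ‖x‖ ^ (-((finrank ℝ E : ℝ) - 1)) • u x) μ) :
    Integrable (fun ξ : sphere (0 : E) 1 => ∫ r in Ioi (0 : ℝ), u (r • ξ.1)) μ.toSphere :=
  ((integrable_comp_smul_sphere_prod_iff μ).2 hu).integral_prod_left.congr
    (.of_forall (integral_volumeIoiPow_norm_rpow_smul u))

theorem ae_integrableOn_Ioi_of_integrable_norm_rpow_smul
    (hu : Integrable (fun x => ‖x‖ ^ (-((finrank ℝ E : ℝ) - 1)) • u x) μ) :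
    ∀ᵐ ξ : sphere (0 : E) 1 ∂μ.toSphere,
      IntegrableOn (fun r : ℝ => u (r • ξ.1)) (Ioi 0) := by
  filter_upwards [((integrable_comp_smul_sphere_prod_iff μ).2 hu).prod_right_ae] with ξ hξ
  exact (integrableOn_congr_fun (eqOn_pow_smul_norm_rpow_smul u ξ) measurableSet_Ioi).1
    (integrable_volumeIoiPow_iff.1 hξ)

theorem integral_toSphere_integral_comp_smul
    (hu : Integrable (fun x => ‖x‖ ^ (-((finrank ℝ E : ℝ) - 1)) • u x) μ) :
    ∫ ξ : sphere (0 : E) 1, (∫ t : ℝ, u (t • ξ.1)) ∂μ.toSphere =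
      (2 : ℝ) • ∫ x, ‖x‖ ^ (-((finrank ℝ E : ℝ) - 1)) • u x ∂μ := by
  have hu_neg : Integrable (fun x => ‖x‖ ^ (-((finrank ℝ E : ℝ) - 1)) • u (-x)) μ := by
    simpa only [norm_neg] using hu.comp_neg
  have h_neg_eq : ∫ x, ‖x‖ ^ (-((finrank ℝ E : ℝ) - 1)) • u (-x) ∂μ =
      ∫ x, ‖x‖ ^ (-((finrank ℝ E : ℝ) - 1)) • u x ∂μ := by
    simpa only [norm_neg] using
      integral_neg_eq_self (fun x => ‖x‖ ^ (-((finrank ℝ E : ℝ) - 1)) • u x) μ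
  have h_split : ∀ᵐ ξ : sphere (0 : E) 1 ∂μ.toSphere, ∫ t : ℝ, u (t • ξ.1) =
      (∫ r in Ioi (0 : ℝ), u (r • ξ.1)) + ∫ r in Ioi (0 : ℝ), u (-(r • ξ.1)) := by
    filter_upwards [ae_integrableOn_Ioi_of_integrable_norm_rpow_smul hu,
      ae_integrableOn_Ioi_of_integrable_norm_rpow_smul hu_neg] with ξ h_pos h_neg
    simp only [← neg_smul] at h_neg ⊢
    exact integral_eq_integral_Ioi_add_integral_Ioi_comp_neg h_pos h_neg
  rw [integral_congr_ae h_split,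
    integral_add (integrable_toSphere_integral_Ioi_of_integrable_norm_rpow_smul hu)
      (integrable_toSphere_integral_Ioi_of_integrable_norm_rpow_smul hu_neg),
    ← integral_norm_rpow_smul_eq_integral_toSphere_integral_Ioi hu,
    ← integral_norm_rpow_smul_eq_integral_toSphere_integral_Ioi hu_neg, h_neg_eq, two_smul]

end

theorem weighted_fourier_slice_identity_general
    (D : ℕ) (hD : 1 ≤ D)
    (f : EuclideanSpace ℝ (Fin D) → ℂ)
    (h : ℝ → ℂ) (heven : ∀ ϑ : ℝ, ‖h (-ϑ)‖ = ‖h ϑ‖)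
    (hfin : Integrable
      (fun k : EuclideanSpace ℝ (Fin D) =>
        ‖h ‖k‖‖ ^ 2 * ‖k‖ ^ (-((D : ℝ) - 1)) * ‖𝓕 f k‖ ^ 2)) :
    (∫ ξ : Metric.sphere (0 : EuclideanSpace ℝ (Fin D)) 1,
        (∫ ϑ : ℝ, ‖h ϑ * 𝓕 f (ϑ • (ξ : EuclideanSpace ℝ (Fin D)))‖ ^ 2)
        ∂(volume : Measure (EuclideanSpace ℝ (Fin D))).toSphere)
      = 2 * ∫ k : EuclideanSpace ℝ (Fin D),
          ‖h ‖k‖‖ ^ 2 * ‖k‖ ^ (-((D : ℝ) - 1)) * ‖𝓕 f k‖ ^ 2 := by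
  have : Nontrivial (EuclideanSpace ℝ (Fin D)) :=
    nontrivial_of_finrank_pos (by rwa [finrank_euclideanSpace_fin])
  have h_slice : ∀ (ξ : sphere (0 : EuclideanSpace ℝ (Fin D)) 1) (ϑ : ℝ),
      ‖h ϑ * 𝓕 f (ϑ • ξ.1)‖ ^ 2 = ‖h ‖ϑ • ξ.1‖‖ ^ 2 * ‖𝓕 f (ϑ • ξ.1)‖ ^ 2 := by
    intro ξ ϑ
    rw [norm_mul, mul_pow, norm_smul, norm_eq_of_mem_sphere ξ, mul_one, Real.norm_eq_abs]
    rcases abs_choice ϑ with hϑ | hϑ <;> simp only [hϑ, heven]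
  have h_weight : (fun k : EuclideanSpace ℝ (Fin D) =>
      ‖h ‖k‖‖ ^ 2 * ‖k‖ ^ (-((D : ℝ) - 1)) * ‖𝓕 f k‖ ^ 2) = fun k =>
      ‖k‖ ^ (-((finrank ℝ (EuclideanSpace ℝ (Fin D)) : ℝ) - 1)) •
        (‖h ‖k‖‖ ^ 2 * ‖𝓕 f k‖ ^ 2) := by
    ext k
    rw [finrank_euclideanSpace_fin, smul_eq_mul]
    ring
  rw [h_weight] at hfin ⊢
  simp only [h_slice, integral_toSphere_integral_comp_smul hfin, smul_eq_mul]

/-- Weighted Fourier slice identity: for a measurable weight `h` with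
`‖h(−ϑ)‖ = ‖h(ϑ)‖`, integrating `‖h(ϑ) 𝓕f(ϑξ)‖²` over sphere directions and
signed radii equals `2 ∫ ‖h(‖k‖)‖² ‖k‖^{-(D-1)} ‖𝓕f(k)‖² dk`. -/
theorem weighted_fourier_slice_identity
    (D : ℕ) (hD : 1 ≤ D)
    (f : EuclideanSpace ℝ (Fin D) → ℂ)
    (h : ℝ → ℂ) (hmeas : Measurable h) (heven : ∀ ϑ : ℝ, ‖h (-ϑ)‖ = ‖h ϑ‖)
    (hfin : Integrable
      (fun k : EuclideanSpace ℝ (Fin D) =>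
        ‖h ‖k‖‖ ^ 2 * ‖k‖ ^ (-((D : ℝ) - 1)) * ‖𝓕 f k‖ ^ 2)) :
    (∫ ξ : Metric.sphere (0 : EuclideanSpace ℝ (Fin D)) 1,
        (∫ ϑ : ℝ, ‖h ϑ * 𝓕 f (ϑ • (ξ : EuclideanSpace ℝ (Fin D)))‖ ^ 2)
        ∂(volume : Measure (EuclideanSpace ℝ (Fin D))).toSphere)
      = 2 * ∫ k : EuclideanSpace ℝ (Fin D),
          ‖h ‖k‖‖ ^ 2 * ‖k‖ ^ (-((D : ℝ) - 1)) * ‖𝓕 f k‖ ^ 2 :=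
  weighted_fourier_slice_identity_general D hD f h heven hfin
end

section
/- The Fourier transform of the saturating ReLU φ(z) = max(z,0) − max(z−Δ,0), as a tempered distribution acting on Lizorkin test functions, equals −(1 − e^{−iΔk})/k²; hence its spectral penalty factor is (1/2) k⁴/(1 − cos(Δk)). -/
/-!
Write `χ(k) = ψ(k)/k²`. Since `ψ(0) = ψ'(0) = 0`, `χ` is bounded near `0`, so
`χ` and `k χ(k)` are integrable. Let `G(z) = ∫ χ(k) e^{-ikz} dk`. Differentiating under the integral
twice gives `G'' = -ψ̂`, and `G' → 0` at `+∞` by Riemann–Lebesgue. Since `φ'' = δ₀ - δ_Δ`,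
integrating by parts gives `∫ φ ψ̂ = -∫ φ G'' = G(Δ) - G(0) = ∫ χ(k) (e^{-iΔk} - 1) dk`, the
right-hand side.
-/

open MeasureTheory Complex Filter Topology Set
open scoped Real FourierTransform SchwartzMap

/-- The Fourier transform in angular frequency; Mathlib's `𝓕` uses the kernel `e^{-2πikz}`. -/
noncomputable def fourierAngular (f : ℝ → ℂ) (z : ℝ) : ℂ :=
  ∫ k : ℝ, f k * exp (-I * z * k)

theorem fourierAngular_eq_fourier (f : ℝ → ℂ) (z : ℝ) :
    fourierAngular f z = 𝓕 f (z / (2 * π)) := by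
  rw [fourierAngular, Real.fourier_real_eq_integral_exp_smul]
  congr 1 with k
  rw [smul_eq_mul, mul_comm]
  congr 2
  push_cast
  field_simp

theorem fourierAngular_const_mul (c : ℂ) (f : ℝ → ℂ) (z : ℝ) :
    fourierAngular (fun k => c * f k) z = c * fourierAngular f z := by
  simp only [fourierAngular, mul_assoc, integral_const_mul]

theorem hasDerivAt_fourierAngular {f : ℝ → ℂ} (hf : Integrable f)
    (hf' : Integrable fun k : ℝ => k • f k) (z : ℝ) :
    HasDerivAt (fourierAngular f) (fourierAngular (fun k => -I * k * f k) z) z := by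
  have h := (Real.hasDerivAt_fourier hf hf' (z / (2 * π))).scomp z
    ((hasDerivAt_id z).div_const (2 * π))
  rw [funext (fourierAngular_eq_fourier f)]
  refine h.congr_deriv ?_
  rw [← fourierAngular_eq_fourier, Complex.real_smul, ← fourierAngular_const_mul]
  congr 1 with k
  simp only [smul_eq_mul]
  push_cast
  field_simp

theorem tendsto_fourierAngular_atTop (f : ℝ → ℂ) :
    Tendsto (fourierAngular f) atTop (𝓝 0) := by
  rw [funext (fourierAngular_eq_fourier f)]
  exact ((Real.zero_at_infty_fourier f).mono_left atTop_le_cocompact).comp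
    (tendsto_id.atTop_div_const (by positivity))

theorem MeasureTheory.Integrable.mul_exp_neg_I_mul {f : ℝ → ℂ} (hf : Integrable f) (z : ℝ) :
    Integrable fun k : ℝ => f k * exp (-I * z * k) := by
  refine hf.mul_bdd (c := 1) (by fun_prop) (ae_of_all _ fun k => ?_)
  rw [show -I * z * k = ((-(z * k) : ℝ) : ℂ) * I by push_cast; ring, norm_exp_ofReal_mul_I]

theorem SchwartzMap.integrable_fourierAngular (ψ : 𝓢(ℝ, ℂ)) :
    Integrable (fourierAngular ψ) := by
  rw [funext (fourierAngular_eq_fourier ψ)]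
  exact (𝓕 ψ).integrable.comp_div (by positivity)

noncomputable def ramp (a b z : ℝ) : ℝ := max (z - a) 0 - max (z - b) 0

section Ramp

variable {a b z : ℝ}

theorem ramp_of_le (hab : a ≤ b) (hz : z ≤ a) : ramp a b z = 0 := by
  simp only [ramp, max_eq_right (sub_nonpos.2 hz), max_eq_right (sub_nonpos.2 (hz.trans hab)),
    sub_zero]

theorem ramp_of_mem_Icc (hz : z ∈ Icc a b) : ramp a b z = z - a := by
  simp only [ramp, max_eq_left (sub_nonneg.2 hz.1), max_eq_right (sub_nonpos.2 hz.2), sub_zero]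

theorem ramp_of_ge (hab : a ≤ b) (hz : b ≤ z) : ramp a b z = b - a := by
  simp only [ramp, max_eq_left (sub_nonneg.2 (hab.trans hz)), max_eq_left (sub_nonneg.2 hz)]
  ring

theorem ramp_comm (a b z : ℝ) : ramp b a z = -ramp a b z := by
  simp only [ramp, neg_sub]

theorem abs_ramp_le (a b z : ℝ) : |ramp a b z| ≤ |b - a| := by
  simpa [ramp] using abs_max_sub_max_le_abs (z - a) (z - b) 0

theorem continuous_ramp (a b : ℝ) : Continuous (ramp a b) := by
  unfold ramp; fun_prop

end Ramp

section RampPairing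

variable {E : Type*} [NormedAddCommGroup E] [NormedSpace ℝ E] [CompleteSpace E]
  {G G' G'' : ℝ → E}

theorem integral_ramp_smul_of_le (hG : ∀ z, HasDerivAt G (G' z) z)
    (hG' : ∀ z, HasDerivAt G' (G'' z) z) (hG'' : Integrable G'')
    (hlim : Tendsto G' atTop (𝓝 0)) {a b : ℝ} (hab : a ≤ b) :
    ∫ z, ramp a b z • G'' z = G a - G b := by
  have hint : Integrable fun z => ramp a b z • G'' z :=
    hG''.bdd_smul |b - a| (continuous_ramp a b).aestronglyMeasurable
      (ae_of_all _ fun z => (Real.norm_eq_abs _).trans_le (abs_ramp_le a b z))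
  have left : ∫ z in Iic a, ramp a b z • G'' z = 0 :=
    setIntegral_eq_zero_of_forall_eq_zero fun z hz => by rw [ramp_of_le hab hz, zero_smul]
  have middle : ∫ z in a..b, ramp a b z • G'' z = (b - a) • G' b - (G b - G a) := by
    have hG'cont : Continuous G' := continuous_iff_continuousAt.2 fun z => (hG' z).continuousAt
    rw [intervalIntegral.integral_congr (g := fun z => (z - a) • G'' z)
        fun z hz => by rw [ramp_of_mem_Icc (uIcc_of_le hab ▸ hz)],
      intervalIntegral.integral_smul_deriv_eq_deriv_smul (u := fun z => z - a)
        (fun z _ => (hasDerivAt_id' z).sub_const a) (fun z _ => hG' z)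
        intervalIntegrable_const hG''.intervalIntegrable]
    simp only [one_smul, sub_self, zero_smul, sub_zero]
    rw [intervalIntegral.integral_eq_sub_of_hasDerivAt (fun z _ => hG z)
      (hG'cont.intervalIntegrable _ _)]
  have right : ∫ z in Ioi b, ramp a b z • G'' z = (b - a) • (0 - G' b) := by
    rw [setIntegral_congr_fun measurableSet_Ioi fun z hz => by rw [ramp_of_ge hab (le_of_lt hz)],
      integral_smul, integral_Ioi_of_hasDerivAt_of_tendsto' (fun z _ => hG' z)
        hG''.integrableOn hlim]
  rw [← intervalIntegral.integral_Iic_add_Ioi hint.integrableOn hint.integrableOn, left,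
    ← intervalIntegral.integral_interval_add_Ioi hint.integrableOn hint.integrableOn, middle,
    right]
  simp only [smul_sub, smul_zero]
  abel

theorem integral_ramp_smul (hG : ∀ z, HasDerivAt G (G' z) z)
    (hG' : ∀ z, HasDerivAt G' (G'' z) z) (hG'' : Integrable G'')
    (hlim : Tendsto G' atTop (𝓝 0)) (a b : ℝ) :
    ∫ z, ramp a b z • G'' z = G a - G b := by
  rcases le_total a b with hab | hba
  · exact integral_ramp_smul_of_le hG hG' hG'' hlim hab
  · simp_rw [ramp_comm b a, neg_smul, integral_neg,
      integral_ramp_smul_of_le hG hG' hG'' hlim hba, neg_sub]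

end RampPairing

theorem norm_le_mul_abs_pow_succ_of_norm_deriv_le {E : Type*} [NormedAddCommGroup E]
    [NormedSpace ℝ E] {f : ℝ → E} {C : ℝ} {n : ℕ} (hf : Differentiable ℝ f) (h0 : f 0 = 0)
    (hf' : ∀ x, ‖deriv f x‖ ≤ C * |x| ^ n) (x : ℝ) :
    ‖f x‖ ≤ C * |x| ^ (n + 1) := by
  have hC : 0 ≤ C := by simpa using (norm_nonneg _).trans (hf' 1)
  have hball : ∀ y ∈ Metric.closedBall (0 : ℝ) |x|, ‖deriv f y‖ ≤ C * |x| ^ n := fun y hy =>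
    (hf' y).trans <| mul_le_mul_of_nonneg_left
      (pow_le_pow_left₀ (abs_nonneg y) (by simpa using hy) n) hC
  have := (convex_closedBall (0 : ℝ) |x|).norm_image_sub_le_of_norm_deriv_le (fun y _ => hf y)
    hball (Metric.mem_closedBall_self (abs_nonneg x)) (by simp : x ∈ Metric.closedBall (0 : ℝ) |x|)
  simpa [h0, pow_succ, mul_assoc] using this

theorem integrable_of_norm_le_of_sq_mul_norm_le {E : Type*} [NormedAddCommGroup E] {g : ℝ → E}
    {A B : ℝ} (hg : AEStronglyMeasurable g) (hA : ∀ x, ‖g x‖ ≤ A) (hB : ∀ x, x ^ 2 * ‖g x‖ ≤ B) :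
    Integrable g := by
  refine (integrable_inv_one_add_sq.const_mul (A + B)).mono' hg (ae_of_all _ fun x => ?_)
  rw [← div_eq_mul_inv, le_div_iff₀ (by positivity)]
  linarith [hA x, hB x]

namespace SchwartzMap

theorem norm_le_seminorm_mul_sq {E : Type*} [NormedAddCommGroup E] [NormedSpace ℝ E]
    (ψ : 𝓢(ℝ, E)) (h0 : ψ 0 = 0) (h1 : deriv ψ 0 = 0) (x : ℝ) :
    ‖ψ x‖ ≤ SchwartzMap.seminorm ℝ 0 2 ψ * x ^ 2 := by
  have hψ'' : ∀ y, ‖deriv (deriv ψ) y‖ ≤ SchwartzMap.seminorm ℝ 0 2 ψ * |y| ^ 0 := fun y => by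
    simpa [iteratedDeriv_succ] using SchwartzMap.le_seminorm' ℝ 0 2 ψ y
  have hψ' := norm_le_mul_abs_pow_succ_of_norm_deriv_le
    (SchwartzMap.derivCLM ℝ E ψ).differentiable h1 hψ''
  simpa [sq_abs] using norm_le_mul_abs_pow_succ_of_norm_deriv_le ψ.differentiable h0 hψ' x

variable (ψ : 𝓢(ℝ, ℂ))

theorem norm_div_sq_le (h0 : ψ 0 = 0) (h1 : deriv ψ 0 = 0) (x : ℝ) :
    ‖ψ x / (x : ℂ) ^ 2‖ ≤ SchwartzMap.seminorm ℝ 0 2 ψ := by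
  rw [norm_div, norm_pow, norm_real, Real.norm_eq_abs, sq_abs]
  exact div_le_of_le_mul₀ (sq_nonneg x) (apply_nonneg _ _) (ψ.norm_le_seminorm_mul_sq h0 h1 x)

theorem sq_mul_norm_div_sq_le (x : ℝ) : x ^ 2 * ‖ψ x / (x : ℂ) ^ 2‖ ≤ ‖ψ x‖ := by
  rw [norm_div, norm_pow, norm_real, Real.norm_eq_abs, sq_abs, mul_div_assoc']
  exact div_le_of_le_mul₀ (sq_nonneg x) (norm_nonneg _) (by rw [mul_comm])

theorem aestronglyMeasurable_div_sq : AEStronglyMeasurable fun x : ℝ => ψ x / (x : ℂ) ^ 2 :=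
  (ψ.continuous.measurable.div (by fun_prop)).aestronglyMeasurable

theorem integrable_div_sq (h0 : ψ 0 = 0) (h1 : deriv ψ 0 = 0) :
    Integrable fun x : ℝ => ψ x / (x : ℂ) ^ 2 :=
  integrable_of_norm_le_of_sq_mul_norm_le ψ.aestronglyMeasurable_div_sq
    (ψ.norm_div_sq_le h0 h1) fun x => (ψ.sq_mul_norm_div_sq_le x).trans (ψ.norm_le_seminorm ℝ x)

theorem integrable_smul_div_sq (h0 : ψ 0 = 0) (h1 : deriv ψ 0 = 0) :
    Integrable fun x : ℝ => x • (ψ x / (x : ℂ) ^ 2) := by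
  refine integrable_of_norm_le_of_sq_mul_norm_le
    (aestronglyMeasurable_id.smul ψ.aestronglyMeasurable_div_sq)
    (A := SchwartzMap.seminorm ℝ 0 2 ψ + SchwartzMap.seminorm ℝ 0 0 ψ)
    (B := SchwartzMap.seminorm ℝ 1 0 ψ) (fun x => ?_) (fun x => ?_)
  · calc ‖x • (ψ x / (x : ℂ) ^ 2)‖ ≤ (1 + x ^ 2) * ‖ψ x / (x : ℂ) ^ 2‖ := by
          rw [norm_smul, Real.norm_eq_abs]
          gcongr
          nlinarith [abs_nonneg x, sq_abs x]
      _ ≤ _ := by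
          linarith [ψ.norm_div_sq_le h0 h1 x, ψ.sq_mul_norm_div_sq_le x, ψ.norm_le_seminorm ℝ x]
  · calc x ^ 2 * ‖x • (ψ x / (x : ℂ) ^ 2)‖ = |x| * (x ^ 2 * ‖ψ x / (x : ℂ) ^ 2‖) := by
          rw [norm_smul, Real.norm_eq_abs]
          ring
      _ ≤ |x| * ‖ψ x‖ := by gcongr; exact ψ.sq_mul_norm_div_sq_le x
      _ ≤ _ := by simpa using ψ.norm_pow_mul_le_seminorm ℝ 1 x

theorem hasDerivAt_fourierAngular_neg_I_mul_div_sq (h0 : ψ 0 = 0) (h1 : deriv ψ 0 = 0) (z : ℝ) :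
    HasDerivAt (fourierAngular fun k => -I * k * (ψ k / (k : ℂ) ^ 2))
      (-fourierAngular ψ z) z := by
  have hsq : ∀ k : ℝ, (k : ℂ) ^ 2 * (ψ k / (k : ℂ) ^ 2) = ψ k := fun k => by
    rcases eq_or_ne k 0 with rfl | hk
    · simp [h0]
    · exact mul_div_cancel₀ _ (by exact_mod_cast pow_ne_zero 2 hk)
  have hint : Integrable fun k : ℝ => -I * k * (ψ k / (k : ℂ) ^ 2) := by
    simpa [Complex.real_smul, mul_assoc] using (ψ.integrable_smul_div_sq h0 h1).const_mul (-I)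
  have hint' : Integrable fun k : ℝ => k • (-I * k * (ψ k / (k : ℂ) ^ 2)) := by
    refine (ψ.integrable.const_mul (-I)).congr (ae_of_all _ fun k => ?_)
    simp only [Complex.real_smul]
    linear_combination I * hsq k
  convert hasDerivAt_fourierAngular hint hint' z using 1
  rw [← neg_one_mul, ← fourierAngular_const_mul]
  congr 1 with k
  linear_combination hsq k - (k : ℂ) ^ 2 * (ψ k / (k : ℂ) ^ 2) * I_sq

end SchwartzMap

theorem integral_neg_one_sub_exp_div_sq_mul {f : ℝ → ℂ} (hf : Integrable fun k : ℝ => f k / (k : ℂ) ^ 2)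
    (Δ : ℝ) :
    ∫ k : ℝ, -(1 - exp (-I * Δ * k)) / (k : ℂ) ^ 2 * f k
      = fourierAngular (fun k => f k / (k : ℂ) ^ 2) Δ
        - fourierAngular (fun k => f k / (k : ℂ) ^ 2) 0 := by
  rw [fourierAngular, fourierAngular, ← integral_sub (hf.mul_exp_neg_I_mul Δ)
    (hf.mul_exp_neg_I_mul 0)]
  congr 1 with k
  simp only [ofReal_zero, mul_zero, zero_mul, exp_zero]
  ring

theorem norm_one_sub_exp_neg_I_mul_sq (t : ℝ) :
    ‖1 - exp (-I * t)‖ ^ 2 = 2 * (1 - Real.cos t) := by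
  rw [norm_sub_rev, show -I * t = I * ((-t : ℝ) : ℂ) by push_cast; ring,
    norm_exp_I_mul_ofReal_sub_one]
  simp only [norm_mul, mul_pow, Real.norm_eq_abs, sq_abs, Real.sin_sq_eq_half_sub]
  rw [show 2 * (-t / 2) = -t by ring, Real.cos_neg]
  ring

theorem sq_inv_norm_neg_one_sub_exp_div_sq (Δ k : ℝ) :
    (‖-(1 - exp (-I * Δ * k)) / (k : ℂ) ^ 2‖⁻¹) ^ 2 = 1 / 2 * k ^ 4 / (1 - Real.cos (Δ * k)) := by
  rw [norm_div, norm_neg, inv_div, div_pow,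
    show -I * Δ * k = -I * ((Δ * k : ℝ) : ℂ) by push_cast; ring,
    norm_one_sub_exp_neg_I_mul_sq, norm_pow, norm_real, Real.norm_eq_abs, sq_abs, mul_comm,
    ← div_div]
  ring

theorem fourier_satrelu_general
    (Δ : ℝ) :
    (∀ ψ : SchwartzMap ℝ ℂ, (∀ n : ℕ, iteratedDeriv n (⇑ψ) 0 = 0) →
      (∫ z : ℝ, ((max z 0 - max (z - Δ) 0 : ℝ) : ℂ)
          * (∫ x : ℝ, ψ x * Complex.exp (-Complex.I * (z : ℂ) * (x : ℂ))))
        = ∫ k : ℝ, (-(1 - Complex.exp (-Complex.I * (Δ : ℂ) * (k : ℂ))) / (k : ℂ) ^ 2) * ψ k)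
    ∧ ∀ k : ℝ, Real.cos (Δ * k) ≠ 1 →
      (‖-(1 - Complex.exp (-Complex.I * (Δ : ℂ) * (k : ℂ))) / (k : ℂ) ^ 2‖⁻¹) ^ 2
        = (1 / 2) * k ^ 4 / (1 - Real.cos (Δ * k)) := by
  refine ⟨fun ψ hψ => ?_, fun k _ => sq_inv_norm_neg_one_sub_exp_div_sq Δ k⟩
  have h0 : ψ 0 = 0 := by simpa using hψ 0
  have h1 : deriv ψ 0 = 0 := by simpa using hψ 1
  have hpairing := integral_ramp_smul
    (hasDerivAt_fourierAngular (ψ.integrable_div_sq h0 h1) (ψ.integrable_smul_div_sq h0 h1))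
    (ψ.hasDerivAt_fourierAngular_neg_I_mul_div_sq h0 h1) ψ.integrable_fourierAngular.neg
    (tendsto_fourierAngular_atTop _) 0 Δ
  rw [integral_neg_one_sub_exp_div_sq_mul (ψ.integrable_div_sq h0 h1), ← neg_sub, ← hpairing,
    ← integral_neg]
  congr 1 with z
  simp [ramp, fourierAngular, Complex.real_smul]

/-- The Fourier transform (convention `∫ f(z) e^{−ikz} dz`) of the saturating
ReLU `φ(z) = max(z,0) − max(z−Δ,0)`, as a tempered distribution acting on
Lizorkin test functions (Schwartz functions all of whose derivatives vanish at
0), equals `−(1 − e^{−iΔk})/k²`; its spectral penalty factor is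
`(1/2) k⁴/(1 − cos(Δk))`. -/
theorem fourier_satrelu
    (Δ : ℝ) (hΔ : 0 < Δ) :
    (∀ ψ : SchwartzMap ℝ ℂ, (∀ n : ℕ, iteratedDeriv n (⇑ψ) 0 = 0) →
      (∫ z : ℝ, ((max z 0 - max (z - Δ) 0 : ℝ) : ℂ)
          * (∫ x : ℝ, ψ x * Complex.exp (-Complex.I * (z : ℂ) * (x : ℂ))))
        = ∫ k : ℝ, (-(1 - Complex.exp (-Complex.I * (Δ : ℂ) * (k : ℂ))) / (k : ℂ) ^ 2) * ψ k)
    ∧ ∀ k : ℝ, Real.cos (Δ * k) ≠ 1 →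
      (‖-(1 - Complex.exp (-Complex.I * (Δ : ℂ) * (k : ℂ))) / (k : ℂ) ^ 2‖⁻¹) ^ 2
        = (1 / 2) * k ^ 4 / (1 - Real.cos (Δ * k)) :=
  fourier_satrelu_general Δ
end
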